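/- arXiv:2401.05473 — 2 statements merged into one kernel-verified Lean document; each statement's English description precedes it below -/
import Mathlib

section
/- Let Ω be a finite set with |Ω| = n ≥ 1 and let P be a pyramid on Ω, i.e., a collection of nonempty subsets of Ω such that Ω ∈ P, every singleton {w} with w ∈ Ω belongs to P, for all h, h' ∈ P the intersection h ∩ h' is in P or empty, and there exists a total order θ on Ω compatible with P (every element of P is connected with respect to θ). Then the number of clusters in P satisfies |P| ≤ n(n+1)/2. -/
/-- a pyramid on a finite set of `n ≥ 1` elements has at most
`n (n + 1) / 2` clusters. Compatibility of a total order `r` with `P` is expressed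
by order-convexity of every cluster: every `w` lying (w.r.t. `r`) between two
elements of a cluster belongs to that cluster. -/
theorem pyramid_card_le {Ω : Type*} [Fintype Ω] [DecidableEq Ω] (n : ℕ)
    (hn : 1 ≤ n) (hcard : Fintype.card Ω = n)
    (P : Finset (Finset Ω))
    (hm : ∀ h ∈ P, h.Nonempty)
    (hΩ : (Finset.univ : Finset Ω) ∈ P)
    (hsing : ∀ w : Ω, {w} ∈ P)
    (hinter : ∀ h ∈ P, ∀ h' ∈ P, h ∩ h' ∈ P ∨ h ∩ h' = ∅)
    (horder : ∃ r : Ω → Ω → Prop, IsLinearOrder Ω r ∧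
      ∀ h ∈ P, ∀ a ∈ h, ∀ b ∈ h, ∀ w : Ω, r a w → r w b → w ∈ h) :
    P.card ≤ n * (n + 1) / 2 := by
  classical
  obtain ⟨r, hlin, hconv⟩ := horder
  letI : LinearOrder Ω :=
    { le := r
      le_refl := fun a => hlin.toIsPartialOrder.toIsPreorder.toRefl.refl a
      le_trans := fun a b c => hlin.toIsPartialOrder.toIsPreorder.toIsTrans.trans a b c
      le_antisymm := fun a b => hlin.toIsPartialOrder.toAntisymm.antisymm a b
      le_total := fun a b => hlin.toTotal.total a b
      toDecidableLE := fun a b => Classical.dec _ }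
  set f : Finset Ω → Finset Ω :=
    fun h => if hne : h.Nonempty then {h.min' hne, h.max' hne} else ∅ with hf
  set T : Finset (Finset Ω) :=
    Finset.powersetCard 1 (Finset.univ : Finset Ω) ∪
      Finset.powersetCard 2 (Finset.univ : Finset Ω) with hT
  have hmaps : ∀ h ∈ P, f h ∈ T := by
    intro h hmem
    have hne := hm h hmem
    simp only [hf, dif_pos hne]
    by_cases hab : h.min' hne = h.max' hne
    · apply Finset.mem_union_left
      rw [Finset.mem_powersetCard_univ]
      simp [hab]
    · apply Finset.mem_union_right
      rw [Finset.mem_powersetCard_univ]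
      rw [Finset.card_insert_of_notMem (by simp [hab]), Finset.card_singleton]
  have hinj : Set.InjOn f P := by
    intro h hmem h' hmem' heq
    have hne := hm h hmem
    have hne' := hm h' hmem'
    simp only [hf, dif_pos hne, dif_pos hne'] at heq
    set a := h.min' hne with ha
    set b := h.max' hne with hb
    set a' := h'.min' hne' with ha'
    set b' := h'.max' hne' with hb'
    have hab : a ≤ b := Finset.min'_le _ _ (Finset.max'_mem _ _)
    have hab' : a' ≤ b' := Finset.min'_le _ _ (Finset.max'_mem _ _)
    have m1 : a = a' ∨ a = b' := by
      have : a ∈ ({a', b'} : Finset Ω) := by rw [← heq]; simp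
      simpa using this
    have m2 : b = a' ∨ b = b' := by
      have : b ∈ ({a', b'} : Finset Ω) := by rw [← heq]; simp
      simpa using this
    have m3 : a' = a ∨ a' = b := by
      have : a' ∈ ({a, b} : Finset Ω) := by rw [heq]; simp
      simpa using this
    have m4 : b' = a ∨ b' = b := by
      have : b' ∈ ({a, b} : Finset Ω) := by rw [heq]; simp
      simpa using this
    have hmin : a = a' := by
      rcases m1 with h1 | h1
      · exact h1
      · rcases m3 with h3 | h3
        · exact h3.symm
        · exact le_antisymm (by rw [h3]; exact hab) (by rw [h1]; exact hab')
    have hmax : b = b' := by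
      rcases m2 with h2 | h2
      · rcases m4 with h4 | h4
        · exact le_antisymm (by rw [h2]; exact hab') (by rw [h4]; exact hab)
        · exact h4.symm
      · exact h2
    apply Finset.ext
    intro w
    constructor
    · intro hw
      refine hconv h' hmem' a' (Finset.min'_mem _ _) b' (Finset.max'_mem _ _) w ?_ ?_
      · exact hmin ▸ Finset.min'_le _ _ hw
      · exact hmax ▸ Finset.le_max' _ _ hw
    · intro hw
      refine hconv h hmem a (Finset.min'_mem _ _) b (Finset.max'_mem _ _) w ?_ ?_
      · exact hmin ▸ Finset.min'_le _ _ hw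
      · exact hmax ▸ Finset.le_max' _ _ hw
  have hle : P.card ≤ T.card := Finset.card_le_card_of_injOn f hmaps hinj
  have hTcard : T.card ≤ n.choose 1 + n.choose 2 := by
    calc T.card ≤ (Finset.powersetCard 1 (Finset.univ : Finset Ω)).card +
        (Finset.powersetCard 2 (Finset.univ : Finset Ω)).card := Finset.card_union_le _ _
      _ = n.choose 1 + n.choose 2 := by
          rw [Finset.card_powersetCard, Finset.card_powersetCard, Finset.card_univ, hcard]
  have hchoose : n.choose 1 + n.choose 2 = n * (n + 1) / 2 := by
    have h1 : (n + 1).choose 2 = n.choose 1 + n.choose 2 := Nat.choose_succ_succ n 1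
    rw [← h1, Nat.choose_two_right]
    simp [Nat.mul_comm]
  omega
end

section
/- Let Ω be a finite nonempty set and let P be a hierarchy on Ω, i.e., a collection of nonempty subsets of Ω containing Ω and all singletons {w} (w ∈ Ω), and such that for all h, h' ∈ P one has h ⊆ h', or h' ⊆ h, or h ∩ h' = ∅. Then there exists a total order θ on Ω compatible with P, so that P is a pyramid. (Pyramids generalize hierarchies.) -/
lemma hierarchy_exists_list {Ω : Type*} [DecidableEq Ω]
    (P : Finset (Finset Ω))
    (hm : ∀ h ∈ P, h.Nonempty)
    (hsing : ∀ w : Ω, {w} ∈ P)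
    (hnested : ∀ h ∈ P, ∀ h' ∈ P, h ⊆ h' ∨ h' ⊆ h ∨ h ∩ h' = ∅) :
    ∀ n : ℕ, ∀ s ∈ P, s.card ≤ n →
      ∃ l : List Ω, l.Nodup ∧ l.toFinset = s ∧
        ∀ h ∈ P, h ⊆ s → ∃ l₁ l₂ l₃ : List Ω, l = l₁ ++ l₂ ++ l₃ ∧ l₂.toFinset = h := by
  intro n
  induction n with
  | zero =>
    intro s hs hc
    exact absurd (Finset.card_pos.mpr (hm s hs)) (by omega)
  | succ n ih =>
    intro s hs hc
    by_cases hsc : s.card ≤ 1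
    · obtain ⟨w, hw⟩ := Finset.card_eq_one.mp (le_antisymm hsc (Finset.card_pos.mpr (hm s hs)))
      refine ⟨[w], by simp, by simp [hw], ?_⟩
      intro h hh hhs
      obtain ⟨x, hx⟩ := hm h hh
      have : h = {w} := by
        apply Finset.Subset.antisymm (hw ▸ hhs)
        have := hhs hx
        rw [hw, Finset.mem_singleton] at this
        subst this
        exact Finset.singleton_subset_iff.mpr hx
      exact ⟨[], [w], [], by simp, by simp [this]⟩
    · push_neg at hsc
      -- child of w : maximal proper subcluster of s containing w
      have hchild : ∀ w ∈ s, ∃ c, (c ∈ P ∧ w ∈ c ∧ c ⊂ s) ∧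
          ∀ h ∈ P, w ∈ h → h ⊂ s → h.card ≤ c.card := by
        intro w hw
        have hne : ({w} : Finset Ω) ⊂ s := by
          constructor
          · simpa using hw
          · intro hsub
            have := Finset.card_le_card hsub
            simp at this; omega
        have : (P.filter (fun h => w ∈ h ∧ h ⊂ s)).Nonempty :=
          ⟨{w}, by simp [hsing w, hne]⟩
        obtain ⟨c, hcmem, hcmax⟩ := Finset.exists_max_image _ Finset.card this
        simp only [Finset.mem_filter] at hcmem
        refine ⟨c, ⟨hcmem.1, hcmem.2.1, hcmem.2.2⟩, ?_⟩
        intro h hh hwh hhs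
        exact hcmax h (by simp [hh, hwh, hhs])
      choose! ch hch hmax using hchild
      have hsub : ∀ w ∈ s, ∀ h ∈ P, w ∈ h → h ⊂ s → h ⊆ ch w := by
        intro w hw h hh hwh hhs
        obtain ⟨hcP, hwc, hcs⟩ := hch w hw
        rcases hnested h hh (ch w) hcP with h1 | h1 | h1
        · exact h1
        · have e := Finset.eq_of_subset_of_card_le h1 (hmax w hw h hh hwh hhs)
          rw [← e]
        · exact absurd (Finset.eq_empty_iff_forall_notMem.mp h1 w) (by simp [hwh, hwc])
      have hdisj : ∀ w ∈ s, ∀ w' ∈ s, ch w = ch w' ∨ ch w ∩ ch w' = ∅ := by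
        intro w hw w' hw'
        obtain ⟨hcP, hwc, hcs⟩ := hch w hw
        obtain ⟨hcP', hwc', hcs'⟩ := hch w' hw'
        rcases hnested (ch w) hcP (ch w') hcP' with h1 | h1 | h1
        · left; exact Finset.eq_of_subset_of_card_le h1
            (hmax w hw (ch w') hcP' (h1 hwc) hcs')
        · left; exact (Finset.eq_of_subset_of_card_le h1
            (hmax w' hw' (ch w) hcP (h1 hwc') hcs)).symm
        · right; exact h1
      set C : Finset (Finset Ω) := s.image ch with hC
      have hrec : ∀ c ∈ C, ∃ l : List Ω, l.Nodup ∧ l.toFinset = c ∧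
          ∀ h ∈ P, h ⊆ c → ∃ l₁ l₂ l₃ : List Ω, l = l₁ ++ l₂ ++ l₃ ∧ l₂.toFinset = h := by
        intro c hc
        obtain ⟨w, hw, rfl⟩ := Finset.mem_image.mp hc
        obtain ⟨hcP, hwc, hcs⟩ := hch w hw
        exact ih (ch w) hcP (by have h2 := Finset.card_lt_card hcs; omega)
      choose! F hF1 hF2 hF3 using hrec
      have key : ∀ c ∈ C, ∀ x, x ∈ F c ↔ x ∈ c := by
        intro c hc x
        conv_rhs => rw [← hF2 c hc]
        exact List.mem_toFinset.symm
      have hcsub : ∀ c ∈ C, c ⊆ s := by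
        intro c hc
        obtain ⟨w, hw, rfl⟩ := Finset.mem_image.mp hc
        exact (hch w hw).2.2.subset
      have htf : ((C.toList.map F).flatten).toFinset = s := by
        ext x
        simp only [List.mem_toFinset, List.mem_flatten, List.mem_map]
        constructor
        · rintro ⟨l', ⟨c, hc, rfl⟩, hx⟩
          exact hcsub c (Finset.mem_toList.mp hc) ((key c (Finset.mem_toList.mp hc) x).mp hx)
        · intro hx
          refine ⟨F (ch x), ⟨ch x, Finset.mem_toList.mpr (Finset.mem_image_of_mem ch hx), rfl⟩, ?_⟩
          exact (key (ch x) (Finset.mem_image_of_mem ch hx) x).mpr (hch x hx).2.1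
      refine ⟨(C.toList.map F).flatten, ?_, htf, ?_⟩
      · rw [List.nodup_flatten]
        constructor
        · intro l' hl'
          obtain ⟨c, hc, rfl⟩ := List.mem_map.mp hl'
          exact hF1 c (Finset.mem_toList.mp hc)
        · rw [List.pairwise_map]
          refine List.Pairwise.imp_of_mem ?_ C.nodup_toList
          intro c c' hc hc' hne
          rw [Finset.mem_toList] at hc hc'
          obtain ⟨w, hw, rfl⟩ := Finset.mem_image.mp hc
          obtain ⟨w', hw', rfl⟩ := Finset.mem_image.mp hc'
          rcases hdisj w hw w' hw' with h1 | h1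
          · exact absurd h1 hne
          · intro x hx hx'
            have := Finset.eq_empty_iff_forall_notMem.mp h1 x
            rw [Finset.mem_inter] at this
            exact this ⟨(key _ hc x).mp hx, (key _ hc' x).mp hx'⟩
      · intro h hh hhs
        by_cases heq : h = s
        · exact ⟨[], (C.toList.map F).flatten, [], by simp, by rw [htf, heq]⟩
        · obtain ⟨x, hx⟩ := hm h hh
          have hxs : x ∈ s := hhs hx
          have hcC : ch x ∈ C := Finset.mem_image_of_mem ch hxs
          have hhc : h ⊆ ch x := hsub x hxs h hh hx ⟨hhs, fun hc => heq (Finset.Subset.antisymm hhs hc)⟩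
          obtain ⟨l₁, l₂, l₃, hdec, hl₂⟩ := hF3 (ch x) hcC h hh hhc
          obtain ⟨A, B, hAB⟩ := List.append_of_mem (Finset.mem_toList.mpr hcC)
          refine ⟨(A.map F).flatten ++ l₁, l₂, l₃ ++ (B.map F).flatten, ?_, hl₂⟩
          rw [hAB]
          simp only [List.map_append, List.map_cons, List.flatten_append, List.flatten_cons, hdec]
          simp [List.append_assoc]


/-- every hierarchy on a finite nonempty set admits a compatible total
order, hence is a pyramid. Compatibility of the total order `r` with `P` is expressed
by order-convexity of every cluster: every `w` lying (w.r.t. `r`) between two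
elements of a cluster belongs to that cluster. -/
theorem hierarchy_exists_compatible_order {Ω : Type*} [Fintype Ω] [Nonempty Ω]
    [DecidableEq Ω]
    (P : Finset (Finset Ω))
    (hm : ∀ h ∈ P, h.Nonempty)
    (hΩ : (Finset.univ : Finset Ω) ∈ P)
    (hsing : ∀ w : Ω, {w} ∈ P)
    (hnested : ∀ h ∈ P, ∀ h' ∈ P, h ⊆ h' ∨ h' ⊆ h ∨ h ∩ h' = ∅) :
    ∃ r : Ω → Ω → Prop, IsLinearOrder Ω r ∧
      ∀ h ∈ P, ∀ a ∈ h, ∀ b ∈ h, ∀ w : Ω, r a w → r w b → w ∈ h := by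
  obtain ⟨l, hl1, hl2, hl3⟩ := hierarchy_exists_list P hm hsing hnested
    (Finset.univ : Finset Ω).card Finset.univ hΩ le_rfl
  have hmem : ∀ x : Ω, x ∈ l := fun x => by
    rw [← List.mem_toFinset, hl2]; exact Finset.mem_univ x
  refine ⟨fun a b => l.idxOf a ≤ l.idxOf b, ?_, ?_⟩
  · exact { refl := fun a => le_refl _
            trans := fun a b c => le_trans
            antisymm := fun a b h1 h2 =>
              (List.idxOf_inj (hmem a)).mp (le_antisymm h1 h2)
            total := fun a b => le_total _ _ }
  · intro h hh a ha b hb w haw hwb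
    obtain ⟨l₁, l₂, l₃, hdec, hl₂⟩ := hl3 h hh (Finset.subset_univ h)
    have hnd : (l₁ ++ (l₂ ++ l₃)).Nodup := by rw [← List.append_assoc, ← hdec]; exact hl1
    rw [List.nodup_append'] at hnd
    obtain ⟨hnd1, hnd23, hdisj1⟩ := hnd
    rw [List.nodup_append'] at hnd23
    obtain ⟨hnd2, hnd3, hdisj23⟩ := hnd23
    have hmem2 : ∀ x, x ∈ h ↔ x ∈ l₂ := fun x => by
      rw [← hl₂, List.mem_toFinset]
    -- index bounds for members of l₂
    have hidx : ∀ x ∈ l₂, l.idxOf x = l₁.length + l₂.idxOf x := by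
      intro x hx
      rw [hdec, List.append_assoc, List.idxOf_append_of_notMem (fun hx1 => hdisj1 hx1 (List.mem_append_left _ hx)),
        List.idxOf_append_of_mem hx]
    have hub : ∀ x ∈ l₂, l.idxOf x < l₁.length + l₂.length := by
      intro x hx
      rw [hidx x hx]
      exact Nat.add_lt_add_left (List.idxOf_lt_length_iff.mpr hx) _
    have hlb : ∀ x ∈ l₂, l₁.length ≤ l.idxOf x := by
      intro x hx
      rw [hidx x hx]; omega
    have ha2 := (hmem2 a).mp ha
    have hb2 := (hmem2 b).mp hb
    rw [hmem2]
    rcases (List.mem_append.mp ((hdec ▸ hmem w) : w ∈ l₁ ++ l₂ ++ l₃)) with h1 | h1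
    · rcases List.mem_append.mp h1 with h2 | h2
      · -- w ∈ l₁ : contradiction with r a w
        exfalso
        have : l.idxOf w < l₁.length := by
          rw [hdec, List.append_assoc, List.idxOf_append_of_mem h2]
          exact List.idxOf_lt_length_iff.mpr h2
        have := hlb a ha2
        omega
      · exact h2
    · -- w ∈ l₃ : contradiction with r w b
      exfalso
      have hw1 : w ∉ l₁ := fun hx => hdisj1 hx (List.mem_append_right _ h1)
      have hw2 : w ∉ l₂ := fun hx => hdisj23 hx h1
      have : l₁.length + l₂.length ≤ l.idxOf w := by
        rw [hdec, List.append_assoc, List.idxOf_append_of_notMem hw1,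
          List.idxOf_append_of_notMem hw2]
        omega
      have := hub b hb2
      omega
end
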